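/- Let U be a finite set and C_1, …, C_m ⊆ U (m ≥ 1) with ⋃_{i=1}^m C_i = U, and let G be the graph of the Maximum Coverage reduction built from this instance. Then for every k with 1 ≤ k ≤ m, the optimum of the Maximum Expansion problem on G equals the optimum of the Maximum Coverage instance shifted by the clique contribution: max_{S ⊆ I ⊎ U, |S| = k} |N(S)| = (m − k) + max_{T ⊆ {1,…,m}, |T| = k} |⋃_{i ∈ T} C_i|. (This is the correctness of the reduction used in Proposition 1 to show that the Maximum Expansion problem is NP-hard.) -/

import Mathlib

/-!
A `k`-set `S` of vertices splits into index vertices `A` and elements `B`. Its neighbourhood lies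
in `(I \ A) ∪ (⋃_{i ∈ A} C_i \ B)`; choosing an index covering each element of `B` completes `A`
to a `k`-set `T` of indices whose coverage also pays for `B`, so `|N(S)| ≤ (m - k) + |⋃_{i ∈ T} C_i|`.
Conversely, a nonempty `k`-set of indices has as neighbourhood exactly the other `m - k` indices
and the elements it covers.
-/

open Finset

/-- The neighborhood `N(S)` of a set of vertices `S`: all vertices outside `S`
adjacent to some vertex of `S`. -/
def nbhd {V : Type*} [Fintype V] [DecidableEq V] (G : SimpleGraph V) [DecidableRel G.Adj]
    (S : Finset V) : Finset V :=
  Finset.univ.filter fun w => w ∉ S ∧ ∃ v ∈ S, G.Adj v w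

/-- The graph of the Maximum Coverage reduction: vertex set `I ⊎ U` with
`I = Fin m` a clique of index vertices, `U` an independent set, and an edge
between index vertex `i` and element `u` exactly when `u ∈ C i`. -/
def redGraph {U : Type*} [DecidableEq U] (m : ℕ) (C : Fin m → Finset U) :
    SimpleGraph (Fin m ⊕ U) where
  Adj x y := match x, y with
    | Sum.inl i, Sum.inl j => i ≠ j
    | Sum.inl i, Sum.inr u => u ∈ C i
    | Sum.inr u, Sum.inl i => u ∈ C i
    | Sum.inr _, Sum.inr _ => False
  symm := ⟨by
    rintro (i | u) (j | w) h
    · exact h.symm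
    · exact h
    · exact h
    · exact h⟩
  loopless := ⟨by
    rintro (i | u) h
    · exact h rfl
    · exact h⟩

instance {U : Type*} [DecidableEq U] (m : ℕ) (C : Fin m → Finset U) :
    DecidableRel (redGraph m C).Adj := fun x y =>
  match x, y with
  | Sum.inl i, Sum.inl j => inferInstanceAs (Decidable (i ≠ j))
  | Sum.inl i, Sum.inr u => inferInstanceAs (Decidable (u ∈ C i))
  | Sum.inr u, Sum.inl i => inferInstanceAs (Decidable (u ∈ C i))
  | Sum.inr _, Sum.inr _ => inferInstanceAs (Decidable False)

section Coverage

variable {ι U : Type*} [Fintype ι] [DecidableEq U]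

def maxCoverage (C : ι → Finset U) (k : ℕ) : ℕ :=
  (powersetCard k (univ : Finset ι)).sup fun T => #(T.biUnion C)

theorem card_biUnion_le_maxCoverage (C : ι → Finset U) {T : Finset ι} {k : ℕ} (hT : #T = k) :
    #(T.biUnion C) ≤ maxCoverage C k :=
  le_sup (f := fun T => #(T.biUnion C)) (mem_powersetCard.mpr ⟨subset_univ T, hT⟩)

theorem exists_card_eq_maxCoverage (C : ι → Finset U) {k : ℕ} (hk : k ≤ Fintype.card ι) :
    ∃ T : Finset ι, #T = k ∧ #(T.biUnion C) = maxCoverage C k := by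
  have hne : (powersetCard k (univ : Finset ι)).Nonempty :=
    powersetCard_nonempty.mpr (by rwa [card_univ])
  obtain ⟨T, hT, hmax⟩ := exists_mem_eq_sup _ hne fun T => #(T.biUnion C)
  exact ⟨T, (mem_powersetCard.mp hT).2, hmax.symm⟩

/-- Elements of `B` are paid for one by one with an index covering each of them. -/
theorem card_biUnion_sdiff_add_card_le_maxCoverage [DecidableEq ι] {C : ι → Finset U}
    (hC : ∀ u, ∃ i, u ∈ C i) {A : Finset ι} {B : Finset U} {k : ℕ}
    (hAB : #A + #B = k) (hk : k ≤ Fintype.card ι) :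
    #(A.biUnion C \ B) + #B ≤ maxCoverage C k := by
  choose f hf using hC
  have hcard : #(A ∪ B.image f) ≤ k :=
    calc #(A ∪ B.image f) ≤ #A + #(B.image f) := card_union_le _ _
      _ ≤ #A + #B := by gcongr; exact card_image_le
      _ = k := hAB
  obtain ⟨T, hAT, hT⟩ := exists_superset_card_eq hcard (by simpa using hk)
  have hcover : A.biUnion C \ B ∪ B ⊆ T.biUnion C := by
    refine union_subset (sdiff_subset.trans (biUnion_subset_biUnion_of_subset_left C
      (subset_union_left.trans hAT))) fun u hu => mem_biUnion.mpr ⟨f u, ?_, hf u⟩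
    exact hAT (mem_union_right _ (mem_image_of_mem f hu))
  calc #(A.biUnion C \ B) + #B = #(A.biUnion C \ B ∪ B) :=
        (card_union_of_disjoint sdiff_disjoint).symm
    _ ≤ #(T.biUnion C) := card_le_card hcover
    _ ≤ maxCoverage C k := card_biUnion_le_maxCoverage C hT

end Coverage

section Expansion

variable {V : Type*} [Fintype V] [DecidableEq V]

def maxExpansion (G : SimpleGraph V) [DecidableRel G.Adj] (k : ℕ) : ℕ :=
  (powersetCard k (univ : Finset V)).sup fun S => #(nbhd G S)

theorem mem_nbhd {G : SimpleGraph V} [DecidableRel G.Adj] {S : Finset V} {w : V} :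
    w ∈ nbhd G S ↔ w ∉ S ∧ ∃ v ∈ S, G.Adj v w := by
  simp [nbhd]

end Expansion

section ReductionGraph

variable {U : Type*} [DecidableEq U] {m : ℕ} {C : Fin m → Finset U}

@[simp]
theorem redGraph_adj_inl_inl {i j : Fin m} : (redGraph m C).Adj (.inl i) (.inl j) ↔ i ≠ j :=
  Iff.rfl

@[simp]
theorem redGraph_adj_inl_inr {i : Fin m} {u : U} : (redGraph m C).Adj (.inl i) (.inr u) ↔ u ∈ C i :=
  Iff.rfl

@[simp]
theorem redGraph_not_adj_inr_inr {u w : U} : ¬(redGraph m C).Adj (.inr u) (.inr w) :=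
  id

variable [Fintype U]

theorem toLeft_nbhd_redGraph_subset (S : Finset (Fin m ⊕ U)) :
    (nbhd (redGraph m C) S).toLeft ⊆ S.toLeftᶜ := by
  intro i hi
  simpa using (mem_nbhd.mp (mem_toLeft.mp hi)).1

theorem toRight_nbhd_redGraph_subset (S : Finset (Fin m ⊕ U)) :
    (nbhd (redGraph m C) S).toRight ⊆ S.toLeft.biUnion C \ S.toRight := by
  intro u hu
  obtain ⟨huS, v, hvS, hadj⟩ := mem_nbhd.mp (mem_toRight.mp hu)
  rcases v with i | w
  · exact mem_sdiff.mpr ⟨mem_biUnion.mpr ⟨i, mem_toLeft.mpr hvS, hadj⟩, by simpa using huS⟩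
  · exact absurd hadj redGraph_not_adj_inr_inr

theorem card_nbhd_redGraph_le (S : Finset (Fin m ⊕ U)) :
    #(nbhd (redGraph m C) S) ≤ (m - #S.toLeft) + #(S.toLeft.biUnion C \ S.toRight) := by
  rw [← card_toLeft_add_card_toRight (u := nbhd (redGraph m C) S)]
  have hleft := card_le_card (toLeft_nbhd_redGraph_subset (C := C) S)
  rw [card_compl, Fintype.card_fin] at hleft
  exact add_le_add hleft (card_le_card (toRight_nbhd_redGraph_subset S))

theorem card_nbhd_redGraph_le_maxCoverage (hC : ∀ u, ∃ i, u ∈ C i)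
    {k : ℕ} (hkm : k ≤ m) {S : Finset (Fin m ⊕ U)} (hS : #S = k) :
    #(nbhd (redGraph m C) S) ≤ (m - k) + maxCoverage C k := by
  have hAB : #S.toLeft + #S.toRight = k := by rw [card_toLeft_add_card_toRight, hS]
  have hcover := card_biUnion_sdiff_add_card_le_maxCoverage hC hAB (by simpa using hkm)
  have := card_nbhd_redGraph_le (C := C) S
  omega

/-- Nonemptiness of `T` is what puts every other index vertex into the neighbourhood. -/
theorem nbhd_redGraph_map_inl {T : Finset (Fin m)} (hT : T.Nonempty) :
    nbhd (redGraph m C) (T.map .inl) = Tᶜ.disjSum (T.biUnion C) := by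
  ext (i | u)
  · simp only [mem_nbhd, mem_map, Function.Embedding.inl_apply, Sum.inl.injEq, exists_eq_right,
      inl_mem_disjSum, mem_compl]
    refine ⟨And.left, fun hi => ⟨hi, ?_⟩⟩
    obtain ⟨j, hj⟩ := hT
    exact ⟨.inl j, ⟨j, hj, rfl⟩, redGraph_adj_inl_inl.mpr (ne_of_mem_of_not_mem hj hi)⟩
  · simp [mem_nbhd]

theorem card_nbhd_redGraph_map_inl {T : Finset (Fin m)} (hT : T.Nonempty) :
    #(nbhd (redGraph m C) (T.map .inl)) = (m - #T) + #(T.biUnion C) := by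
  rw [nbhd_redGraph_map_inl hT, card_disjSum, card_compl, Fintype.card_fin]

end ReductionGraph

theorem reduction_correct_general {U : Type*} [Fintype U] [DecidableEq U]
    (m k : ℕ) (C : Fin m → Finset U)
    (hU : ∀ u : U, ∃ i : Fin m, u ∈ C i)
    (hk : 1 ≤ k) (hkm : k ≤ m) :
    ((Finset.powersetCard k (Finset.univ : Finset (Fin m ⊕ U))).sup
        fun S => (nbhd (redGraph m C) S).card) =
      (m - k) + ((Finset.powersetCard k (Finset.univ : Finset (Fin m))).sup
        fun T => (T.biUnion C).card) := by
  change maxExpansion (redGraph m C) k = (m - k) + maxCoverage C k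
  refine le_antisymm (Finset.sup_le fun S hS => ?_) ?_
  · exact card_nbhd_redGraph_le_maxCoverage hU hkm (mem_powersetCard.mp hS).2
  · obtain ⟨T, hT, hmax⟩ := exists_card_eq_maxCoverage C (k := k) (by simpa using hkm)
    have hTne : T.Nonempty := card_pos.mp (by omega)
    calc (m - k) + maxCoverage C k = #(nbhd (redGraph m C) (T.map .inl)) := by
          rw [card_nbhd_redGraph_map_inl hTne, hT, hmax]
      _ ≤ maxExpansion (redGraph m C) k :=
          le_sup (f := fun S => #(nbhd (redGraph m C) S))
            (mem_powersetCard.mpr ⟨subset_univ _, by rw [card_map, hT]⟩)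

/-- **Correctness of the reduction used in Proposition 1.** For `1 ≤ k ≤ m`, the optimum
of the Maximum Expansion problem on the reduction graph equals the optimum of the Maximum
Coverage instance shifted by the clique contribution `m - k`. -/
theorem reduction_correct {U : Type*} [Fintype U] [DecidableEq U]
    (m k : ℕ) (hm : 1 ≤ m) (C : Fin m → Finset U)
    (hU : ∀ u : U, ∃ i : Fin m, u ∈ C i)
    (hk : 1 ≤ k) (hkm : k ≤ m) :
    ((Finset.powersetCard k (Finset.univ : Finset (Fin m ⊕ U))).sup
        fun S => (nbhd (redGraph m C) S).card) =
      (m - k) + ((Finset.powersetCard k (Finset.univ : Finset (Fin m))).sup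
        fun T => (T.biUnion C).card) :=
  reduction_correct_general m k C hU hk hkm
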